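/- Let J be a joint distribution of (p1, p2, y) in [0,1] × [0,1] × {0,1}, with marginals D1 of (p1, y) and D2 of (p2, y). Then |SCDL(D1)^2 - SCDL(D2)^2| ≤ C·E_J[|p1 - p2|], and consequently |SCDL(D1) - SCDL(D2)| ≤ C'·sqrt(E_J[|p1 - p2|]), for absolute constants C, C'. In particular, SCDL is 1/2-Hölder continuous in the predictions under the L1 coupling distance. -/

import Mathlib

open Finset

/-- Triangular weight function `w_i(x) = max(1 - |m·x - i|, 0)`. -/
noncomputable def tri (m i : ℕ) (x : ℝ) : ℝ := max (1 - |(m : ℝ) * x - (i : ℝ)|) 0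

/-- Bin weight `π_i = E[w_i(p)]` for a finitely supported distribution given by
a finite set `J` of atoms with probabilities `ν` and prediction map `p`. -/
noncomputable def binW {α : Type*} (m : ℕ) (J : Finset α) (ν : α → ℝ) (p : α → ℝ)
    (i : ℕ) : ℝ :=
  ∑ z ∈ J, ν z * tri m i (p z)

/-- Bin conditional mean `q_i = E[w_i(p)·y] / π_i` (zero if `π_i = 0`, by the
convention of division by zero). -/
noncomputable def binQ {α : Type*} (m : ℕ) (J : Finset α) (ν : α → ℝ) (p y : α → ℝ)
    (i : ℕ) : ℝ :=
  (∑ z ∈ J, ν z * tri m i (p z) * y z) / binW m J ν p i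

/-- Soft-binned calibration fixed decision loss at index `i`:
`Σ_{j≤i} π_j·max(q_j - (i+1)/m, 0) + Σ_{j>i} π_j·max(i/m - q_j, 0)`. -/
noncomputable def SCFDL {α : Type*} (m : ℕ) (J : Finset α) (ν : α → ℝ) (p y : α → ℝ)
    (i : ℕ) : ℝ :=
  ∑ j ∈ Finset.range (i + 1), binW m J ν p j * max (binQ m J ν p y j - ((i : ℝ) + 1) / m) 0
    + ∑ j ∈ Finset.Icc (i + 1) m, binW m J ν p j * max ((i : ℝ) / m - binQ m J ν p y j) 0

/-- `SCDL_m(D) = max_{i=0,...,m} SCFDL_{m,i}(D)`. -/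
noncomputable def SCDLm {α : Type*} (m : ℕ) (J : Finset α) (ν : α → ℝ) (p y : α → ℝ) : ℝ :=
  Finset.sup' (Finset.range (m + 1)) (Finset.nonempty_range_iff.mpr (Nat.succ_ne_zero m))
    (SCFDL m J ν p y)

/-- `SCDL(D) = inf over m ∈ {2,4,8,...} of max(SCDL_m(D), 1/m)`. -/
noncomputable def SCDL {α : Type*} (J : Finset α) (ν : α → ℝ) (p y : α → ℝ) : ℝ :=
  ⨅ k : ℕ, max (SCDLm (2 ^ (k + 1)) J ν p y) (1 / 2 ^ (k + 1))


open Filter Topology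

/-!
Two properties of the fixed-scale losses drive the argument. Each prediction lies in the support
of at most two triangular bins, so moving the predictions by `ε` in coupling distance moves the
bin masses by `O(m ε)` and `SCDL_m` by at most `12 m ε`. And every tent at scale `m` is a
`½, 1, ½` combination of tents at scale `2m`, so `SCDL_m ≤ SCDL_{2m}`.

If `SCDL(D₂) < b`, monotonicity lets us work at the coarsest dyadic scale `m` with `1/m < b`,
where `m ≤ 2/b`; hence `SCDL(D₁) ≤ b + 24 ε / b`, and taking `b` near `max (SCDL(D₂), √(24 ε))`
gives `SCDL(D₁)² ≤ SCDL(D₂)² + O(ε)`.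
-/

lemma tri_nonneg (m i : ℕ) (x : ℝ) : 0 ≤ tri m i x := le_max_right _ _

lemma tri_le_one (m i : ℕ) (x : ℝ) : tri m i x ≤ 1 :=
  max_le (by linarith [abs_nonneg ((m : ℝ) * x - i)]) zero_le_one

lemma abs_tri_sub_tri_le (m i : ℕ) (a b : ℝ) : |tri m i a - tri m i b| ≤ m * |a - b| :=
  calc |tri m i a - tri m i b|
      ≤ |(1 - |(m : ℝ) * a - i|) - (1 - |(m : ℝ) * b - i|)| := abs_max_sub_max_le_abs _ _ _
    _ ≤ |((m : ℝ) * b - i) - ((m : ℝ) * a - i)| := by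
      rw [sub_sub_sub_cancel_left]
      exact abs_abs_sub_abs_le_abs_sub _ _
    _ = m * |a - b| := by
      rw [show ((m : ℝ) * b - i) - ((m : ℝ) * a - i) = m * (b - a) by ring, abs_mul,
        Nat.abs_cast, abs_sub_comm]

lemma mem_of_tri_ne_zero {m i : ℕ} {x : ℝ} (hx : 0 ≤ x) (h : tri m i x ≠ 0) :
    i ∈ ({⌊(m : ℝ) * x⌋₊, ⌊(m : ℝ) * x⌋₊ + 1} : Finset ℕ) := by
  have hlt : |(m : ℝ) * x - i| < 1 := by
    by_contra hge
    exact h (max_eq_right (by linarith [not_lt.mp hge]))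
  have hfloor := Nat.floor_le (mul_nonneg (Nat.cast_nonneg m) hx)
  have hfloor' := Nat.lt_floor_add_one ((m : ℝ) * x)
  rw [abs_lt] at hlt
  have h1 : i < ⌊(m : ℝ) * x⌋₊ + 2 := by exact_mod_cast (by linarith : (i : ℝ) < ⌊(m : ℝ) * x⌋₊ + 2)
  have h2 : ⌊(m : ℝ) * x⌋₊ < i + 1 := by exact_mod_cast (by linarith : (⌊(m : ℝ) * x⌋₊ : ℝ) < i + 1)
  simp only [mem_insert, mem_singleton]
  omega

lemma tri_eq_zero_of_le {m j : ℕ} {x : ℝ} (hx : x ≤ 1) (hj : m + 1 ≤ j) : tri m j x = 0 := by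
  have hmx : (m : ℝ) * x ≤ m := mul_le_of_le_one_right (Nat.cast_nonneg m) hx
  have hj' : (m : ℝ) + 1 ≤ j := by exact_mod_cast hj
  exact max_eq_right (by linarith [neg_abs_le ((m : ℝ) * x - j)])

lemma sum_abs_tri_sub_tri_le (m : ℕ) {a b : ℝ} (ha : 0 ≤ a) (hb : 0 ≤ b) :
    ∑ j ∈ range (m + 1), |tri m j a - tri m j b| ≤ 4 * m * |a - b| := by
  classical
  set S : Finset ℕ := {⌊(m : ℝ) * a⌋₊, ⌊(m : ℝ) * a⌋₊ + 1} ∪ {⌊(m : ℝ) * b⌋₊, ⌊(m : ℝ) * b⌋₊ + 1}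
  have hsupp : ∀ j, |tri m j a - tri m j b| ≠ 0 → j ∈ S := by
    intro j hj
    by_cases hja : tri m j a = 0
    · refine mem_union_right _ (mem_of_tri_ne_zero hb fun hjb => hj ?_)
      rw [hja, hjb, sub_self, abs_zero]
    · exact mem_union_left _ (mem_of_tri_ne_zero ha hja)
  have hcard : (#S : ℝ) ≤ 4 := by
    exact_mod_cast (card_union_le _ _).trans (add_le_add card_le_two card_le_two)
  calc ∑ j ∈ range (m + 1), |tri m j a - tri m j b|
      = ∑ j ∈ range (m + 1) with |tri m j a - tri m j b| ≠ 0, |tri m j a - tri m j b| :=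
        (sum_filter_ne_zero _).symm
    _ ≤ ∑ j ∈ S, |tri m j a - tri m j b| :=
        sum_le_sum_of_subset_of_nonneg (fun j hj => hsupp j (mem_filter.mp hj).2)
          fun _ _ _ => abs_nonneg _
    _ ≤ #S • (m * |a - b|) := sum_le_card_nsmul _ _ _ fun j _ => abs_tri_sub_tri_le m j a b
    _ ≤ 4 * m * |a - b| := by
        rw [nsmul_eq_mul, mul_assoc]
        exact mul_le_mul_of_nonneg_right hcard (by positivity)

/-- `coarsen f j = f (2j - 1) / 2 + f (2j) + f (2j + 1) / 2`, with `f (-1)` read as `0`. -/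
noncomputable def coarsen (f : ℕ → ℝ) : ℕ → ℝ
  | 0 => f 0 + f 1 / 2
  | j + 1 => f (2 * j + 1) / 2 + f (2 * j + 2) + f (2 * j + 3) / 2

lemma max_one_sub_abs_eq (s : ℝ) : max (1 - |s|) 0 = (|s + 1| + |s - 1| - 2 * |s|) / 2 := by
  rcases abs_cases s with ⟨h1, h2⟩ | ⟨h1, h2⟩ <;>
  rcases abs_cases (s + 1) with ⟨h3, h4⟩ | ⟨h3, h4⟩ <;>
  rcases abs_cases (s - 1) with ⟨h5, h6⟩ | ⟨h5, h6⟩ <;>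
  rcases max_cases (1 - |s|) (0 : ℝ) with ⟨h7, h8⟩ | ⟨h7, h8⟩ <;>
  rw [h7] <;> linarith

lemma max_one_sub_abs_eq_half_scale (s : ℝ) :
    max (1 - |s|) 0 = max (1 - |2 * s + 1|) 0 / 2 + max (1 - |2 * s|) 0
      + max (1 - |2 * s - 1|) 0 / 2 := by
  have habs : ∀ r : ℝ, |2 * r| = 2 * |r| := fun r => by rw [abs_mul, abs_two]
  rw [max_one_sub_abs_eq, max_one_sub_abs_eq, max_one_sub_abs_eq, max_one_sub_abs_eq]
  simp only [show 2 * s + 1 + 1 = 2 * (s + 1) by ring,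
    show 2 * s + 1 - 1 = 2 * s by ring, show 2 * s - 1 + 1 = 2 * s by ring,
    show 2 * s - 1 - 1 = 2 * (s - 1) by ring, habs]
  ring

lemma tri_eq_coarsen (m j : ℕ) {x : ℝ} (hx : 0 ≤ x) :
    tri m j x = coarsen (fun k => tri (2 * m) k x) j := by
  have key := max_one_sub_abs_eq_half_scale ((m : ℝ) * x - j)
  rcases j with _ | j
  · have hmx : 0 ≤ (m : ℝ) * x := mul_nonneg (Nat.cast_nonneg m) hx
    have hvanish : max (1 - |2 * ((m : ℝ) * x - 0) + 1|) 0 = 0 :=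
      max_eq_right (by rw [abs_of_nonneg (by linarith)]; linarith)
    simp only [coarsen, tri]
    push_cast at key ⊢
    rw [key, hvanish]
    ring_nf
  · simp only [coarsen, tri]
    push_cast at key ⊢
    rw [key]
    ring_nf

lemma coarsen_sub_mul (A W : ℕ → ℝ) (t : ℝ) (j : ℕ) :
    coarsen (fun k => A k - t * W k) j = coarsen A j - t * coarsen W j := by
  cases j <;> simp only [coarsen] <;> ring

lemma coarsen_mul_sub (A W : ℕ → ℝ) (s : ℝ) (j : ℕ) :
    coarsen (fun k => s * W k - A k) j = s * coarsen W j - coarsen A j := by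
  cases j <;> simp only [coarsen] <;> ring

lemma max_coarsen_le (f : ℕ → ℝ) (j : ℕ) :
    max (coarsen f j) 0 ≤ coarsen (fun k => max (f k) 0) j := by
  have hle := fun k => le_max_left (f k) 0
  have hnonneg := fun k => le_max_right (f k) 0
  rcases j with _ | j <;> refine max_le ?_ ?_ <;> simp only [coarsen]
  · linarith [hle 0, hle 1]
  · linarith [hnonneg 0, hnonneg 1]
  · linarith [hle (2 * j + 1), hle (2 * j + 2), hle (2 * j + 3)]
  · linarith [hnonneg (2 * j + 1), hnonneg (2 * j + 2), hnonneg (2 * j + 3)]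

lemma sum_range_coarsen (f : ℕ → ℝ) (i : ℕ) :
    ∑ j ∈ range (i + 1), coarsen f j = ∑ k ∈ range (2 * i + 1), f k + f (2 * i + 1) / 2 := by
  induction i with
  | zero => simp [coarsen]
  | succ i ih =>
    rw [sum_range_succ, ih, show 2 * (i + 1) + 1 = 2 * i + 1 + 1 + 1 by ring,
      sum_range_succ f (2 * i + 1 + 1), sum_range_succ f (2 * i + 1)]
    simp only [coarsen]
    ring

lemma sum_range_add_sum_Icc (f : ℕ → ℝ) {i n : ℕ} (hi : i ≤ n) :
    ∑ j ∈ range (i + 1), f j + ∑ j ∈ Icc (i + 1) n, f j = ∑ j ∈ range (n + 1), f j := by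
  rw [← Ico_add_one_right_eq_Icc]
  exact sum_range_add_sum_Ico f (by omega)

/-- `SCFDL` with the conditional means cleared: `π_j · max (q_j - t) 0 = max (A_j - t π_j) 0`
for the numerators `A_j = π_j q_j`. -/
noncomputable def thresholdLoss (W A : ℕ → ℝ) (n i : ℕ) (t s : ℝ) : ℝ :=
  ∑ j ∈ range (i + 1), max (A j - t * W j) 0 + ∑ j ∈ Icc (i + 1) n, max (s * W j - A j) 0

section thresholdLoss

variable {W A : ℕ → ℝ} {n i : ℕ} {t s : ℝ}

lemma thresholdLoss_eq_sub (hi : i ≤ n) :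
    thresholdLoss W A n i t s = ∑ j ∈ range (i + 1), max (A j - t * W j) 0
      + ∑ j ∈ range (n + 1), max (s * W j - A j) 0
      - ∑ j ∈ range (i + 1), max (s * W j - A j) 0 := by
  rw [thresholdLoss, ← sum_range_add_sum_Icc _ hi]
  ring

lemma thresholdLoss_mono (hW : ∀ j, 0 ≤ W j) {t' s' : ℝ} (ht : t' ≤ t) (hs : s ≤ s') :
    thresholdLoss W A n i t s ≤ thresholdLoss W A n i t' s' := by
  unfold thresholdLoss
  gcongr with j _ j _ <;> exact hW j

lemma thresholdLoss_le_add {W' A' : ℕ → ℝ} (ht : 0 ≤ t) (ht2 : t ≤ 2) (hs : 0 ≤ s)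
    (hs2 : s ≤ 2) (hi : i ≤ n) :
    thresholdLoss W A n i t s ≤ thresholdLoss W' A' n i t s
      + ∑ j ∈ range (n + 1), (|A j - A' j| + 2 * |W j - W' j|) := by
  set d : ℕ → ℝ := fun j => |A j - A' j| + 2 * |W j - W' j|
  have hpos : ∀ {x x' e : ℝ}, |x - x'| ≤ e → max x 0 ≤ max x' 0 + e := fun h => by
    linarith [(abs_le.mp ((abs_max_sub_max_le_abs _ _ 0).trans h)).2]
  have hscale : ∀ {r : ℝ}, 0 ≤ r → r ≤ 2 → ∀ j, |r * (W j - W' j)| ≤ 2 * |W j - W' j| :=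
    fun hr hr2 j => by
      rw [abs_mul, abs_of_nonneg hr]
      exact mul_le_mul_of_nonneg_right hr2 (abs_nonneg _)
  have hup : ∀ j, max (A j - t * W j) 0 ≤ max (A' j - t * W' j) 0 + d j := fun j => hpos <|
    calc |A j - t * W j - (A' j - t * W' j)| = |(A j - A' j) - t * (W j - W' j)| := by ring_nf
      _ ≤ d j := (abs_sub _ _).trans (add_le_add le_rfl (hscale ht ht2 j))
  have hlo : ∀ j, max (s * W j - A j) 0 ≤ max (s * W' j - A' j) 0 + d j := fun j => hpos <|
    calc |s * W j - A j - (s * W' j - A' j)| = |s * (W j - W' j) - (A j - A' j)| := by ring_nf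
      _ ≤ d j := (abs_sub _ _).trans (by linarith [hscale hs hs2 j])
  clear_value d
  calc thresholdLoss W A n i t s
      ≤ ∑ j ∈ range (i + 1), (max (A' j - t * W' j) 0 + d j)
        + ∑ j ∈ Icc (i + 1) n, (max (s * W' j - A' j) 0 + d j) :=
        add_le_add (sum_le_sum fun j _ => hup j) (sum_le_sum fun j _ => hlo j)
    _ = thresholdLoss W' A' n i t s + ∑ j ∈ range (n + 1), d j := by
        rw [sum_add_distrib, sum_add_distrib, thresholdLoss, ← sum_range_add_sum_Icc d hi]
        ring

lemma thresholdLoss_le_sum (hA : ∀ j, 0 ≤ A j) (hAW : ∀ j, A j ≤ W j) (ht : 0 ≤ t)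
    (hs : s ≤ 1) (hi : i ≤ n) :
    thresholdLoss W A n i t s ≤ ∑ j ∈ range (n + 1), W j := by
  rw [← sum_range_add_sum_Icc _ hi]
  unfold thresholdLoss
  gcongr with j _ j _ <;>
    exact max_le (by nlinarith [hA j, hAW j]) ((hA j).trans (hAW j))

/-- Each coarse tent is a `½, 1, ½` combination of fine tents, so the coarse loss at `i` is at
most the average of the fine losses at `2i` and `2i + 1`; when `i = n` the fine bin `2n + 1` is
empty and the index `2i` alone suffices. -/
lemma exists_thresholdLoss_coarsen_le (hW : W (2 * n + 1) = 0) (hA : A (2 * n + 1) = 0)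
    (hi : i ≤ n) : ∃ i', 2 * i ≤ i' ∧ i' ≤ 2 * i + 1 ∧ i' ≤ 2 * n ∧
      thresholdLoss (coarsen W) (coarsen A) n i t s ≤ thresholdLoss W A (2 * n) i' t s := by
  set u : ℕ → ℝ := fun k => max (A k - t * W k) 0
  set l : ℕ → ℝ := fun k => max (s * W k - A k) 0
  have hcoarse : thresholdLoss (coarsen W) (coarsen A) n i t s
      ≤ ∑ j ∈ range (i + 1), coarsen u j + ∑ j ∈ Icc (i + 1) n, coarsen l j := by
    unfold thresholdLoss
    gcongr with j _ j _
    · rw [← coarsen_sub_mul]; exact max_coarsen_le _ j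
    · rw [← coarsen_mul_sub]; exact max_coarsen_le _ j
  rw [← add_sub_cancel_left (∑ j ∈ range (i + 1), coarsen l j) (∑ j ∈ Icc (i + 1) n, coarsen l j),
    sum_range_add_sum_Icc _ hi, sum_range_coarsen, sum_range_coarsen, sum_range_coarsen] at hcoarse
  have hl : l (2 * n + 1) = 0 := by simp [l, hW, hA]
  rcases le_or_gt (u (2 * i + 1)) (l (2 * i + 1)) with hul | hlu
  · refine ⟨2 * i, le_rfl, by omega, by omega, hcoarse.trans ?_⟩
    rw [thresholdLoss_eq_sub (by omega)]
    linarith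
  · have hin : i < n := by
      by_contra! hni
      have hu : u (2 * n + 1) = 0 := by simp [u, hW, hA]
      rw [show i = n by omega] at hlu
      linarith [le_max_right (s * W (2 * n + 1) - A (2 * n + 1)) 0]
    refine ⟨2 * i + 1, by omega, le_rfl, by omega, hcoarse.trans ?_⟩
    rw [thresholdLoss_eq_sub (by omega), sum_range_succ _ (2 * i + 1), sum_range_succ _ (2 * i + 1)]
    linarith

end thresholdLoss

lemma mul_max_div_sub_eq {A W : ℝ} (hA : 0 ≤ A) (hAW : A ≤ W) (t : ℝ) :
    W * max (A / W - t) 0 = max (A - t * W) 0 := by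
  rcases (hA.trans hAW).eq_or_lt with rfl | hW
  · obtain rfl : A = 0 := le_antisymm hAW hA
    simp
  · rw [mul_max_of_nonneg _ _ hW.le, mul_sub, mul_div_cancel₀ _ hW.ne', mul_zero, mul_comm]

lemma mul_max_sub_div_eq {A W : ℝ} (hA : 0 ≤ A) (hAW : A ≤ W) (s : ℝ) :
    W * max (s - A / W) 0 = max (s * W - A) 0 := by
  rcases (hA.trans hAW).eq_or_lt with rfl | hW
  · obtain rfl : A = 0 := le_antisymm hAW hA
    simp
  · rw [mul_max_of_nonneg _ _ hW.le, mul_sub, mul_div_cancel₀ _ hW.ne', mul_zero, mul_comm]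

/-- The numerator `E[w_i(p) y]` of `binQ`, as the bin weight of the weights `ν · y`. -/
noncomputable def binA {α : Type*} (m : ℕ) (J : Finset α) (ν : α → ℝ) (p y : α → ℝ)
    (i : ℕ) : ℝ :=
  binW m J (fun z => ν z * y z) p i

section bins

variable {α : Type*} {J : Finset α} {ν p p₁ p₂ y : α → ℝ}

lemma binW_nonneg (hν : ∀ z ∈ J, 0 ≤ ν z) (m i : ℕ) : 0 ≤ binW m J ν p i :=
  sum_nonneg fun z hz => mul_nonneg (hν z hz) (tri_nonneg _ _ _)

lemma binA_nonneg (hν : ∀ z ∈ J, 0 ≤ ν z) (hy : ∀ z ∈ J, y z = 0 ∨ y z = 1) (m i : ℕ) :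
    0 ≤ binA m J ν p y i :=
  binW_nonneg (fun z hz => by rcases hy z hz with h | h <;> simp [h, hν z hz]) m i

lemma binA_le_binW (hν : ∀ z ∈ J, 0 ≤ ν z) (hy : ∀ z ∈ J, y z = 0 ∨ y z = 1) (m i : ℕ) :
    binA m J ν p y i ≤ binW m J ν p i :=
  sum_le_sum fun z hz => mul_le_mul_of_nonneg_right
    (by rcases hy z hz with h | h <;> simp [h, hν z hz]) (tri_nonneg _ _ _)

lemma binQ_eq_div (m i : ℕ) : binQ m J ν p y i = binA m J ν p y i / binW m J ν p i := by
  unfold binQ binA binW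
  congr 1
  exact sum_congr rfl fun z _ => by ring

lemma SCFDL_eq_thresholdLoss (hν : ∀ z ∈ J, 0 ≤ ν z) (hy : ∀ z ∈ J, y z = 0 ∨ y z = 1)
    (m i : ℕ) : SCFDL m J ν p y i = thresholdLoss (binW m J ν p) (binA m J ν p y) m i
      (((i : ℝ) + 1) / m) ((i : ℝ) / m) := by
  unfold SCFDL thresholdLoss
  simp only [binQ_eq_div, mul_max_div_sub_eq (binA_nonneg hν hy m _) (binA_le_binW hν hy m _),
    mul_max_sub_div_eq (binA_nonneg hν hy m _) (binA_le_binW hν hy m _)]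

lemma sum_abs_binW_sub_binW_le (g : α → ℝ) (hp₁ : ∀ z ∈ J, 0 ≤ p₁ z) (hp₂ : ∀ z ∈ J, 0 ≤ p₂ z)
    (m : ℕ) : ∑ j ∈ range (m + 1), |binW m J g p₁ j - binW m J g p₂ j|
      ≤ 4 * m * ∑ z ∈ J, |g z| * |p₁ z - p₂ z| :=
  calc ∑ j ∈ range (m + 1), |binW m J g p₁ j - binW m J g p₂ j|
      ≤ ∑ j ∈ range (m + 1), ∑ z ∈ J, |g z| * |tri m j (p₁ z) - tri m j (p₂ z)| := by
        gcongr with j _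
        rw [binW, binW, ← sum_sub_distrib]
        refine (abs_sum_le_sum_abs _ _).trans_eq (sum_congr rfl fun z _ => ?_)
        rw [← mul_sub, abs_mul]
    _ = ∑ z ∈ J, |g z| * ∑ j ∈ range (m + 1), |tri m j (p₁ z) - tri m j (p₂ z)| := by
        rw [sum_comm]
        simp only [mul_sum]
    _ ≤ ∑ z ∈ J, |g z| * (4 * m * |p₁ z - p₂ z|) := by
        gcongr with z hz
        exact sum_abs_tri_sub_tri_le m (hp₁ z hz) (hp₂ z hz)
    _ = 4 * m * ∑ z ∈ J, |g z| * |p₁ z - p₂ z| := by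
        rw [mul_sum]
        exact sum_congr rfl fun z _ => by ring

lemma SCFDL_le_add (hν : ∀ z ∈ J, 0 ≤ ν z) (hp₁ : ∀ z ∈ J, 0 ≤ p₁ z)
    (hp₂ : ∀ z ∈ J, 0 ≤ p₂ z) (hy : ∀ z ∈ J, y z = 0 ∨ y z = 1) {m i : ℕ} (hm : 0 < m)
    (hi : i ≤ m) : SCFDL m J ν p₁ y i
      ≤ SCFDL m J ν p₂ y i + 12 * m * ∑ z ∈ J, ν z * |p₁ z - p₂ z| := by
  have hm' : (1 : ℝ) ≤ m := by exact_mod_cast hm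
  have hi' : (i : ℝ) ≤ m := by exact_mod_cast hi
  have hweights : ∀ g : α → ℝ, (∀ z ∈ J, |g z| ≤ ν z) →
      ∑ z ∈ J, |g z| * |p₁ z - p₂ z| ≤ ∑ z ∈ J, ν z * |p₁ z - p₂ z| := fun g hg =>
    sum_le_sum fun z hz => mul_le_mul_of_nonneg_right (hg z hz) (abs_nonneg _)
  have hA := (sum_abs_binW_sub_binW_le (fun z => ν z * y z) hp₁ hp₂ m).trans
    (mul_le_mul_of_nonneg_left (hweights _ fun z hz => by
      rcases hy z hz with h | h <;> simp [h, abs_of_nonneg (hν z hz), hν z hz]) (by positivity))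
  have hW := (sum_abs_binW_sub_binW_le ν hp₁ hp₂ m).trans
    (mul_le_mul_of_nonneg_left (hweights _ fun z hz => (abs_of_nonneg (hν z hz)).le)
      (by positivity))
  rw [SCFDL_eq_thresholdLoss hν hy, SCFDL_eq_thresholdLoss hν hy]
  refine (thresholdLoss_le_add (W' := binW m J ν p₂) (A' := binA m J ν p₂ y) (by positivity) ?_
    (by positivity) ?_ hi).trans (add_le_add le_rfl ?_)
  · rw [div_le_iff₀ (by positivity)]; linarith
  · rw [div_le_iff₀ (by positivity)]; linarith
  · rw [sum_add_distrib, ← mul_sum]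
    unfold binA
    linarith

lemma SCDLm_le_add (hν : ∀ z ∈ J, 0 ≤ ν z) (hp₁ : ∀ z ∈ J, 0 ≤ p₁ z)
    (hp₂ : ∀ z ∈ J, 0 ≤ p₂ z) (hy : ∀ z ∈ J, y z = 0 ∨ y z = 1) {m : ℕ} (hm : 0 < m) :
    SCDLm m J ν p₁ y ≤ SCDLm m J ν p₂ y + 12 * m * ∑ z ∈ J, ν z * |p₁ z - p₂ z| :=
  sup'_le _ _ fun i hi =>
    (SCFDL_le_add hν hp₁ hp₂ hy hm (by simpa [Nat.lt_succ_iff] using hi)).trans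
      (add_le_add (le_sup' _ hi) le_rfl)

lemma SCDLm_le_cast_add_one (hν : ∀ z ∈ J, 0 ≤ ν z) (hν1 : ∑ z ∈ J, ν z = 1)
    (hy : ∀ z ∈ J, y z = 0 ∨ y z = 1) (m : ℕ) : SCDLm m J ν p y ≤ m + 1 := by
  have hbin : ∀ j, binW m J ν p j ≤ 1 := fun j => hν1 ▸ sum_le_sum fun z hz =>
    mul_le_of_le_one_right (hν z hz) (tri_le_one _ _ _)
  refine sup'_le _ _ fun i hi => ?_
  have hi : i ≤ m := by simpa [Nat.lt_succ_iff] using hi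
  rw [SCFDL_eq_thresholdLoss hν hy]
  refine (thresholdLoss_le_sum (binA_nonneg hν hy m) (binA_le_binW hν hy m) (by positivity)
    (div_le_one_of_le₀ (by exact_mod_cast hi) (Nat.cast_nonneg m)) hi).trans ?_
  simpa using sum_le_sum fun j (_ : j ∈ range (m + 1)) => hbin j

lemma binW_eq_coarsen (g : α → ℝ) (hp : ∀ z ∈ J, 0 ≤ p z) (m j : ℕ) :
    binW m J g p j = coarsen (binW (2 * m) J g p) j := by
  rw [binW, sum_congr rfl fun z hz => by rw [tri_eq_coarsen m j (hp z hz)]]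
  rcases j with _ | j <;>
    simp only [coarsen, binW, mul_add, mul_div_assoc', sum_add_distrib, sum_div]

lemma binW_two_mul_eq_zero (g : α → ℝ) (hp : ∀ z ∈ J, p z ≤ 1) (m : ℕ) :
    binW (2 * m) J g p (2 * m + 1) = 0 :=
  sum_eq_zero fun z hz => by rw [tri_eq_zero_of_le (hp z hz) le_rfl, mul_zero]

lemma SCFDL_le_SCDLm_two_mul (hν : ∀ z ∈ J, 0 ≤ ν z) (hp : ∀ z ∈ J, p z ∈ Set.Icc (0 : ℝ) 1)
    (hy : ∀ z ∈ J, y z = 0 ∨ y z = 1) {m i : ℕ} (hm : 0 < m) (hi : i ≤ m) :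
    SCFDL m J ν p y i ≤ SCDLm (2 * m) J ν p y := by
  have hp0 : ∀ z ∈ J, 0 ≤ p z := fun z hz => (hp z hz).1
  have hp1 : ∀ z ∈ J, p z ≤ 1 := fun z hz => (hp z hz).2
  obtain ⟨i', hi'₁, hi'₂, hi'₃, hle⟩ := exists_thresholdLoss_coarsen_le
    (t := ((i : ℝ) + 1) / m) (s := (i : ℝ) / m)
    (binW_two_mul_eq_zero ν hp1 m) (binW_two_mul_eq_zero _ hp1 m) hi
  have hm' : (0 : ℝ) < m := by exact_mod_cast hm
  have hi'₁' : 2 * (i : ℝ) ≤ i' := by exact_mod_cast hi'₁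
  have hi'₂' : (i' : ℝ) ≤ 2 * i + 1 := by exact_mod_cast hi'₂
  rw [SCFDL_eq_thresholdLoss hν hy, funext (binW_eq_coarsen ν hp0 m),
    show binA m J ν p y = coarsen (binA (2 * m) J ν p y) from funext (binW_eq_coarsen _ hp0 m)]
  calc _ ≤ thresholdLoss (binW (2 * m) J ν p) (binA (2 * m) J ν p y) (2 * m) i'
        (((i : ℝ) + 1) / m) ((i : ℝ) / m) := hle
    _ ≤ thresholdLoss (binW (2 * m) J ν p) (binA (2 * m) J ν p y) (2 * m) i'
        (((i' : ℝ) + 1) / (2 * m : ℕ)) ((i' : ℝ) / (2 * m : ℕ)) := by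
      refine thresholdLoss_mono (binW_nonneg hν _) ?_ ?_ <;> push_cast <;>
        rw [div_le_div_iff₀ (by positivity) (by positivity)] <;> nlinarith
    _ = SCFDL (2 * m) J ν p y i' := (SCFDL_eq_thresholdLoss hν hy _ _).symm
    _ ≤ SCDLm (2 * m) J ν p y := le_sup' _ (mem_range.mpr (by omega))

lemma SCDLm_two_pow_succ_mono (hν : ∀ z ∈ J, 0 ≤ ν z) (hp : ∀ z ∈ J, p z ∈ Set.Icc (0 : ℝ) 1)
    (hy : ∀ z ∈ J, y z = 0 ∨ y z = 1) : Monotone fun k : ℕ => SCDLm (2 ^ (k + 1)) J ν p y :=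
  monotone_nat_of_le_succ fun k => sup'_le _ _ fun i hi => by
    rw [pow_succ' 2 (k + 1)]
    exact SCFDL_le_SCDLm_two_mul hν hp hy (by positivity) (by simpa [Nat.lt_succ_iff] using hi)

end bins

open Filter Topology

lemma exists_two_pow_mul_min_le {b : ℝ} {k₀ : ℕ} (h : 1 / (2 : ℝ) ^ (k₀ + 1) < b) :
    ∃ k ≤ k₀, 1 / (2 : ℝ) ^ (k + 1) < b ∧ 2 ^ (k + 1) * min b 1 ≤ 2 := by
  induction k₀ with
  | zero => exact ⟨0, le_rfl, h, by rw [zero_add, pow_one]; linarith [min_le_right b 1]⟩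
  | succ n ih =>
    by_cases hn : 1 / (2 : ℝ) ^ (n + 1) < b
    · obtain ⟨k, hk, hkb⟩ := ih hn
      exact ⟨k, hk.trans n.le_succ, hkb⟩
    · refine ⟨n + 1, le_rfl, h, ?_⟩
      calc (2 : ℝ) ^ (n + 1 + 1) * min b 1 ≤ 2 ^ (n + 1 + 1) * (1 / 2 ^ (n + 1)) := by
            gcongr
            exact (min_le_left b 1).trans (not_lt.mp hn)
        _ = 2 := by rw [pow_succ]; field_simp

/-- Choosing `b` near `max a √(24 ε)` balances the two terms of `b + 24 ε / b`. -/
lemma sq_le_sq_add_of_forall_lt {a A ε : ℝ} (ha : 0 ≤ a) (ha3 : a ≤ 3) (hA : 0 ≤ A)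
    (hA3 : A ≤ 3) (hε : 0 ≤ ε) (h : ∀ b, a < b → A ≤ b + 24 * ε / min b 1) :
    A ^ 2 ≤ a ^ 2 + 216 * ε := by
  set g := √(24 * ε)
  have hg : g ^ 2 = 24 * ε := Real.sq_sqrt (by positivity)
  have hg0 : 0 ≤ g := Real.sqrt_nonneg _
  rcases le_or_gt 1 a with ha1 | ha1
  · have hAa : A - 24 * ε ≤ a := le_of_forall_gt_imp_ge_of_dense fun b hb => by
      have := h b hb
      rw [min_eq_right (by linarith), div_one] at this
      linarith
    nlinarith
  rcases le_or_gt 1 g with hg1 | hg1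
  · nlinarith
  rcases lt_or_ge a g with hag | hga
  · have hgpos : 0 < g := ha.trans_lt hag
    have hA2g := h g hag
    rw [min_eq_left hg1.le, ← hg, sq, mul_div_cancel_right₀ _ hgpos.ne'] at hA2g
    nlinarith
  · have hlim : Tendsto (fun b : ℝ => b ^ 2 + 72 * ε) (𝓝[>] a) (𝓝 (a ^ 2 + 72 * ε)) :=
      ((continuous_pow 2).add continuous_const).continuousAt.tendsto.mono_left nhdsWithin_le_nhds
    refine (ge_of_tendsto hlim ?_).trans (by linarith)
    filter_upwards [Ioo_mem_nhdsGT ha1] with b ⟨hab, hb1⟩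
    have hb0 : 0 < b := ha.trans_lt hab
    have hAb := h b hab
    rw [min_eq_left hb1.le] at hAb
    have hq : 24 * ε / b * b = 24 * ε := div_mul_cancel₀ _ hb0.ne'
    have hqb : 24 * ε / b ≤ b := by rw [div_le_iff₀ hb0]; nlinarith
    nlinarith [div_nonneg (by positivity : 0 ≤ 24 * ε) hb0.le]

section SCDL

variable {α : Type*} {J : Finset α} {ν p p₁ p₂ y : α → ℝ}

lemma bddBelow_range_SCDL :
    BddBelow (Set.range fun k : ℕ => max (SCDLm (2 ^ (k + 1)) J ν p y) (1 / 2 ^ (k + 1))) :=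
  ⟨0, by rintro _ ⟨k, rfl⟩; exact le_max_of_le_right (by positivity)⟩

lemma SCDL_nonneg : 0 ≤ SCDL J ν p y :=
  le_ciInf fun _ => le_max_of_le_right (by positivity)

lemma SCDL_le_three (hν : ∀ z ∈ J, 0 ≤ ν z) (hν1 : ∑ z ∈ J, ν z = 1)
    (hy : ∀ z ∈ J, y z = 0 ∨ y z = 1) : SCDL J ν p y ≤ 3 :=
  (ciInf_le bddBelow_range_SCDL 0).trans <| max_le (by
    have := SCDLm_le_cast_add_one (p := p) hν hν1 hy 2
    norm_num at this ⊢
    linarith) (by norm_num)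

/-- At the coarsest dyadic scale `m` with `1 / m < b`, monotonicity in `m` gives
`SCDL_m(p₂) < b`, while `m ≤ 2 / min b 1` and `SCDL_m` moves by at most `12 m ε`. -/
lemma SCDL_le_add_div (hν : ∀ z ∈ J, 0 ≤ ν z) (hp₁ : ∀ z ∈ J, p₁ z ∈ Set.Icc (0 : ℝ) 1)
    (hp₂ : ∀ z ∈ J, p₂ z ∈ Set.Icc (0 : ℝ) 1) (hy : ∀ z ∈ J, y z = 0 ∨ y z = 1) {b : ℝ}
    (hb : SCDL J ν p₂ y < b) :
    SCDL J ν p₁ y ≤ b + 24 * (∑ z ∈ J, ν z * |p₁ z - p₂ z|) / min b 1 := by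
  set ε := ∑ z ∈ J, ν z * |p₁ z - p₂ z|
  have hε : 0 ≤ ε := sum_nonneg fun z hz => mul_nonneg (hν z hz) (abs_nonneg _)
  have hmin : 0 < min b 1 := lt_min (SCDL_nonneg.trans_lt hb) one_pos
  obtain ⟨k₀, hk₀⟩ := exists_lt_of_ciInf_lt hb
  obtain ⟨k, hkk₀, hkb, hkmin⟩ := exists_two_pow_mul_min_le ((le_max_right _ _).trans_lt hk₀)
  have hlip := SCDLm_le_add hν (fun z hz => (hp₁ z hz).1) (fun z hz => (hp₂ z hz).1) hy
    (m := 2 ^ (k + 1)) (by positivity)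
  have hmono := SCDLm_two_pow_succ_mono hν hp₂ hy hkk₀
  have hk₀b := (le_max_left _ _).trans_lt hk₀
  push_cast at hlip
  calc SCDL J ν p₁ y ≤ max (SCDLm (2 ^ (k + 1)) J ν p₁ y) (1 / 2 ^ (k + 1)) :=
        ciInf_le bddBelow_range_SCDL k
    _ ≤ b + 12 * 2 ^ (k + 1) * ε := by
        refine max_le (by simp only at hmono; linarith) ?_
        nlinarith [pow_pos (two_pos (α := ℝ)) (k + 1)]
    _ ≤ b + 24 * ε / min b 1 := by
        have : 12 * 2 ^ (k + 1) * ε ≤ 24 * ε / min b 1 := by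
          rw [le_div_iff₀ hmin]
          nlinarith
        linarith

lemma SCDL_sq_le_sq_add (hν : ∀ z ∈ J, 0 ≤ ν z) (hν1 : ∑ z ∈ J, ν z = 1)
    (hp₁ : ∀ z ∈ J, p₁ z ∈ Set.Icc (0 : ℝ) 1) (hp₂ : ∀ z ∈ J, p₂ z ∈ Set.Icc (0 : ℝ) 1)
    (hy : ∀ z ∈ J, y z = 0 ∨ y z = 1) :
    SCDL J ν p₁ y ^ 2 ≤ SCDL J ν p₂ y ^ 2 + 216 * ∑ z ∈ J, ν z * |p₁ z - p₂ z| :=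
  sq_le_sq_add_of_forall_lt SCDL_nonneg (SCDL_le_three hν hν1 hy) SCDL_nonneg
    (SCDL_le_three hν hν1 hy) (sum_nonneg fun z hz => mul_nonneg (hν z hz) (abs_nonneg _))
    fun _ hb => SCDL_le_add_div hν hp₁ hp₂ hy hb

end SCDL

lemma sq_sub_le_abs_sq_sub_sq {a b : ℝ} (ha : 0 ≤ a) (hb : 0 ≤ b) :
    (a - b) ^ 2 ≤ |a ^ 2 - b ^ 2| := by
  rw [show a ^ 2 - b ^ 2 = (a - b) * (a + b) by ring, abs_mul,
    abs_of_nonneg (by positivity : 0 ≤ a + b), sq, ← abs_mul_abs_self]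
  exact mul_le_mul_of_nonneg_left (abs_le.mpr ⟨by linarith, by linarith⟩) (abs_nonneg _)

/-- Hölder continuity of `SCDL` in the predictions. For a joint
(coupling) distribution `J` of `(p₁, p₂, y)` with marginals `D₁` of `(p₁, y)` and
`D₂` of `(p₂, y)`, `|SCDL(D₁)² - SCDL(D₂)²| ≤ C·E_J[|p₁ - p₂|]` and consequently
`|SCDL(D₁) - SCDL(D₂)| ≤ C'·√(E_J[|p₁ - p₂|])`, for absolute constants `C, C'`. -/
theorem SCDL_holder :
    ∃ C C' : ℝ, 0 < C ∧ 0 < C' ∧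
      ∀ (α : Type) (J : Finset α) (ν : α → ℝ) (p₁ p₂ y : α → ℝ),
        (∀ z ∈ J, 0 ≤ ν z) → (∑ z ∈ J, ν z = 1) →
        (∀ z ∈ J, p₁ z ∈ Set.Icc (0:ℝ) 1 ∧ p₂ z ∈ Set.Icc (0:ℝ) 1 ∧ (y z = 0 ∨ y z = 1)) →
        |(SCDL J ν p₁ y) ^ 2 - (SCDL J ν p₂ y) ^ 2| ≤ C * ∑ z ∈ J, ν z * |p₁ z - p₂ z|
        ∧ |SCDL J ν p₁ y - SCDL J ν p₂ y|
            ≤ C' * Real.sqrt (∑ z ∈ J, ν z * |p₁ z - p₂ z|) := by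
  refine ⟨216, √216, by norm_num, by positivity, fun α J ν p₁ p₂ y hν hν1 h => ?_⟩
  have hp₁ := fun z hz => (h z hz).1
  have hp₂ := fun z hz => (h z hz).2.1
  have hy := fun z hz => (h z hz).2.2
  have hsymm : ∑ z ∈ J, ν z * |p₂ z - p₁ z| = ∑ z ∈ J, ν z * |p₁ z - p₂ z| := by
    simp only [abs_sub_comm]
  have hsq : |SCDL J ν p₁ y ^ 2 - SCDL J ν p₂ y ^ 2| ≤ 216 * ∑ z ∈ J, ν z * |p₁ z - p₂ z| :=
    abs_sub_le_iff.mpr ⟨by linarith [SCDL_sq_le_sq_add hν hν1 hp₁ hp₂ hy],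
      by linarith [hsymm ▸ SCDL_sq_le_sq_add hν hν1 hp₂ hp₁ hy]⟩
  refine ⟨hsq, ?_⟩
  rw [← Real.sqrt_mul (by norm_num)]
  exact Real.abs_le_sqrt ((sq_sub_le_abs_sq_sub_sq SCDL_nonneg SCDL_nonneg).trans hsq)
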